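/- arXiv:2104.06384 — 2 statements merged into one kernel-verified Lean document; each statement's English description precedes it below -/
import Mathlib

section
/- For each d ≥ 1 let ε_d be a random vector with distribution N(0, I_d), and let ℓ > 0. Then 2ℓ² · E[(‖ε_d‖²/d) · Φ(−(ℓ/2)·‖ε_d‖/√d)] → 2ℓ² · Φ(−ℓ/2) as d → ∞. (Convergence of the expected squared jumping distance of the limiting random-walk Metropolis algorithm with scaling λ = ℓ/√d and proposal covariance matched to the target covariance, as the dimension grows.) -/
open MeasureTheory ProbabilityTheory Real Matrix Filter

/-- CDF of the standard normal distribution. -/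
noncomputable def stdNormalCDF (x : ℝ) : ℝ :=
  ((gaussianReal 0 1) (Set.Iic x)).toReal

/-- Quadratic form `vᵀ A v`. -/
noncomputable def quadForm {d : ℕ} (A : Matrix (Fin d) (Fin d) ℝ) (v : Fin d → ℝ) : ℝ :=
  v ⬝ᵥ (A *ᵥ v)

/-- Density of the `d`-dimensional Gaussian with mean `μ` and covariance `S`. -/
noncomputable def mvGaussianPdf {d : ℕ} (μ : Fin d → ℝ) (S : Matrix (Fin d) (Fin d) ℝ)
    (x : Fin d → ℝ) : ℝ :=
  (2 * Real.pi) ^ (-(d : ℝ) / 2) * S.det ^ (-(1 : ℝ) / 2) *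
    Real.exp (-((x - μ) ⬝ᵥ (S⁻¹ *ᵥ (x - μ))) / 2)

/-- The `d`-dimensional Gaussian distribution `N(μ, S)`. -/
noncomputable def mvGaussian {d : ℕ} (μ : Fin d → ℝ) (S : Matrix (Fin d) (Fin d) ℝ) :
    Measure (Fin d → ℝ) :=
  volume.withDensity (fun x => ENNReal.ofReal (mvGaussianPdf μ S x))

open scoped NNReal ENNReal

/-
Under `N(0, I_d)` the statistic `S = ‖ε‖² / d` has mean `1` and variance `2 / d` (a sum of
`d` independent squares of standard normals, each of variance `E[x⁴] - 1 = 2`). The function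
`s ↦ s Φ(-c √s)` takes the value `Φ(-c)` at `s = 1` and satisfies
`|s Φ(-c √s) - Φ(-c)| ≤ (1 + |c|) |s - 1|` for `s ≥ 0`, because `Φ` is `1`-Lipschitz (the normal
density is below `1`) and `|√s - 1| ≤ |s - 1|`. Hence the expectation differs from `Φ(-c)` by at
most `(1 + |c|) E|S - 1| ≤ (1 + |c|) √(2 / d)`, which tends to `0`.
-/

lemma stdNormalCDF_nonneg (x : ℝ) : 0 ≤ stdNormalCDF x := ENNReal.toReal_nonneg

lemma stdNormalCDF_le_one (x : ℝ) : stdNormalCDF x ≤ 1 := measureReal_le_one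

lemma monotone_stdNormalCDF : Monotone stdNormalCDF := fun _ _ hab =>
  measureReal_mono (Set.Iic_subset_Iic.2 hab)

lemma gaussianPDFReal_zero_one_le_one (x : ℝ) : gaussianPDFReal 0 1 x ≤ 1 := by
  rw [gaussianPDFReal]
  refine mul_le_one₀ (inv_le_one_of_one_le₀ ?_) (exp_nonneg _) (exp_le_one_iff.2 ?_)
  · rw [NNReal.coe_one, mul_one, Real.one_le_sqrt]
    nlinarith [pi_gt_three]
  · exact div_nonpos_of_nonpos_of_nonneg (neg_nonpos.2 (sq_nonneg _)) (by positivity)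

lemma stdNormalCDF_sub_le {a b : ℝ} (hab : b ≤ a) : stdNormalCDF a - stdNormalCDF b ≤ a - b := by
  have hsplit : stdNormalCDF a = stdNormalCDF b + (gaussianReal 0 1).real (Set.Ioc b a) := by
    simp only [stdNormalCDF, ← measureReal_def]
    rw [← Set.Iic_union_Ioc_eq_Iic hab, measureReal_union (Set.Iic_disjoint_Ioc le_rfl)
      measurableSet_Ioc]
  have hIoc : (gaussianReal 0 1).real (Set.Ioc b a) ≤ a - b := by
    rw [measureReal_def, gaussianReal_apply_eq_integral 0 one_ne_zero,
      ENNReal.toReal_ofReal (setIntegral_nonneg measurableSet_Ioc fun x _ =>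
        gaussianPDFReal_nonneg 0 1 x)]
    have := norm_setIntegral_le_of_norm_le_const (μ := volume) (f := gaussianPDFReal 0 1)
      (C := 1) (s := Set.Ioc b a) measure_Ioc_lt_top fun x _ => by
        rw [Real.norm_of_nonneg (gaussianPDFReal_nonneg 0 1 x)]
        exact gaussianPDFReal_zero_one_le_one x
    rw [Real.volume_real_Ioc_of_le hab, one_mul, Real.norm_eq_abs] at this
    exact (le_abs_self _).trans this
  linarith

lemma abs_stdNormalCDF_sub_le (a b : ℝ) : |stdNormalCDF a - stdNormalCDF b| ≤ |a - b| := by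
  rcases le_total b a with hab | hab
  · rw [abs_of_nonneg (sub_nonneg.2 (monotone_stdNormalCDF hab)), abs_of_nonneg (sub_nonneg.2 hab)]
    exact stdNormalCDF_sub_le hab
  · rw [abs_sub_comm, abs_sub_comm a, abs_of_nonneg (sub_nonneg.2 (monotone_stdNormalCDF hab)),
      abs_of_nonneg (sub_nonneg.2 hab)]
    exact stdNormalCDF_sub_le hab

lemma abs_sqrt_sub_one_le {s : ℝ} (hs : 0 ≤ s) : |√s - 1| ≤ |s - 1| := by
  have h : s - 1 = (√s - 1) * (√s + 1) := by nlinarith [Real.sq_sqrt hs]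
  rw [h, abs_mul, abs_of_pos (by positivity : 0 < √s + 1)]
  exact le_mul_of_one_le_right (abs_nonneg _) (by linarith [Real.sqrt_nonneg s])

lemma abs_mul_stdNormalCDF_sub_le (c : ℝ) {s : ℝ} (hs : 0 ≤ s) :
    |s * stdNormalCDF (-c * √s) - stdNormalCDF (-c)| ≤ (1 + |c|) * |s - 1| := by
  have hΦ : |stdNormalCDF (-c * √s) - stdNormalCDF (-c)| ≤ |c| * |s - 1| :=
    calc |stdNormalCDF (-c * √s) - stdNormalCDF (-c)|
        ≤ |-c * √s - -c| := abs_stdNormalCDF_sub_le _ _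
      _ = |c| * |√s - 1| := by rw [show -c * √s - -c = -c * (√s - 1) by ring, abs_mul, abs_neg]
      _ ≤ |c| * |s - 1| := mul_le_mul_of_nonneg_left (abs_sqrt_sub_one_le hs) (abs_nonneg c)
  calc |s * stdNormalCDF (-c * √s) - stdNormalCDF (-c)|
      = |(s - 1) * stdNormalCDF (-c * √s) + (stdNormalCDF (-c * √s) - stdNormalCDF (-c))| := by
        ring_nf
    _ ≤ |s - 1| * 1 + |c| * |s - 1| := by
        refine (abs_add_le _ _).trans (add_le_add ?_ hΦ)
        rw [abs_mul, abs_of_nonneg (stdNormalCDF_nonneg _)]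
        exact mul_le_mul_of_nonneg_left (stdNormalCDF_le_one _) (abs_nonneg _)
    _ = (1 + |c|) * |s - 1| := by ring

lemma integral_sq_gaussianReal (μ : ℝ) (v : ℝ≥0) :
    ∫ x, x ^ 2 ∂gaussianReal μ v = μ ^ 2 + v := by
  have h := variance_eq_sub (memLp_id_gaussianReal (μ := μ) (v := v) 2)
  simp only [variance_id_gaussianReal, Pi.pow_apply, id_eq, integral_id_gaussianReal] at h
  linarith

lemma integral_pow_four_mul_exp_neg_sq_div_two :
    ∫ x : ℝ, x ^ 4 * exp (-(1 / 2 * x ^ 2)) = 3 * √2 * √π := by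
  have hGamma : Real.Gamma (5 / 2) = 3 * √π / 4 := by
    have := Real.Gamma_nat_add_half 2
    norm_num [Nat.doubleFactorial] at this
    exact this
  have hpow : (1 / 2 : ℝ) ^ (-(5 / 2 : ℝ)) = 4 * √2 := by
    rw [one_div, Real.inv_rpow zero_le_two, ← Real.rpow_neg zero_le_two, neg_neg,
      show (5 / 2 : ℝ) = 2 + 1 / 2 by norm_num, Real.rpow_add two_pos, ← Real.sqrt_eq_rpow]
    norm_num
  have hIoi : ∫ x in Set.Ioi (0 : ℝ), x ^ 4 * exp (-(1 / 2 * x ^ 2)) = 3 * √2 * √π / 2 := by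
    have := integral_rpow_mul_exp_neg_mul_rpow (p := 2) (q := 4) (b := 1 / 2) two_pos
      (by norm_num) (by norm_num)
    norm_num [Real.rpow_ofNat] at this
    rw [this, hpow, hGamma]
    ring
  have := integral_comp_abs (f := fun x : ℝ => x ^ 4 * exp (-(1 / 2 * x ^ 2)))
  simp only [Even.pow_abs (by decide : Even 4), sq_abs] at this
  rw [this, hIoi]
  ring

lemma integral_pow_four_gaussianReal : ∫ x, x ^ 4 ∂gaussianReal 0 1 = 3 := by
  rw [integral_gaussianReal_eq_integral_smul one_ne_zero]
  simp only [gaussianPDFReal, smul_eq_mul, NNReal.coe_one, sub_zero, mul_one]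
  calc ∫ x : ℝ, (√(2 * π))⁻¹ * exp (-x ^ 2 / 2) * x ^ 4
      = (√(2 * π))⁻¹ * ∫ x : ℝ, x ^ 4 * exp (-(1 / 2 * x ^ 2)) := by
        rw [← integral_const_mul]; congr 1 with x; ring_nf
    _ = 3 := by
        rw [integral_pow_four_mul_exp_neg_sq_div_two, Real.sqrt_mul zero_le_two]
        field_simp

lemma memLp_sq_gaussianReal (μ : ℝ) (v : ℝ≥0) : MemLp (fun x => x ^ 2) 2 (gaussianReal μ v) := by
  have h := (memLp_id_gaussianReal (μ := μ) (v := v) 4).norm_rpow_div 2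
  simp only [id_eq, Real.norm_eq_abs, ENNReal.toReal_ofNat, Real.rpow_two, sq_abs] at h
  convert h using 1
  rw [ENNReal.eq_div_iff two_ne_zero ENNReal.ofNat_ne_top]
  norm_num

lemma variance_sq_gaussianReal : Var[fun x => x ^ 2; gaussianReal 0 1] = 2 := by
  rw [variance_eq_sub (memLp_sq_gaussianReal 0 1)]
  simp only [Pi.pow_apply, ← pow_mul, integral_sq_gaussianReal]
  norm_num [integral_pow_four_gaussianReal]

lemma mvGaussianPdf_zero_one {d : ℕ} (x : Fin d → ℝ) :
    mvGaussianPdf 0 1 x = ∏ i, gaussianPDFReal 0 1 (x i) := by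
  simp only [mvGaussianPdf, gaussianPDFReal, inv_one, det_one, one_mulVec, sub_zero, one_rpow,
    mul_one, NNReal.coe_one, Finset.prod_mul_distrib, Finset.prod_const, Finset.card_univ,
    Fintype.card_fin, ← Real.exp_sum, dotProduct]
  congr 1
  · rw [Real.sqrt_eq_rpow, ← Real.rpow_neg (by positivity), ← Real.rpow_mul_natCast (by positivity)]
    ring_nf
  · rw [← Finset.sum_div, Finset.sum_neg_distrib]
    simp [sq]

lemma mvGaussian_zero_one {d : ℕ} :
    mvGaussian 0 (1 : Matrix (Fin d) (Fin d) ℝ) = Measure.pi fun _ => gaussianReal 0 1 := by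
  refine (Measure.pi_eq fun s hs => ?_).symm
  have hint : Integrable (fun x : Fin d → ℝ => ∏ i, gaussianPDFReal 0 1 (x i))
      (Measure.pi fun i => volume.restrict (s i)) :=
    Integrable.fintype_prod fun _ => (integrable_gaussianPDFReal 0 1).restrict
  rw [mvGaussian, withDensity_apply _ (MeasurableSet.univ_pi hs), volume_pi,
    Measure.restrict_pi_pi]
  simp_rw [mvGaussianPdf_zero_one]
  rw [← ofReal_integral_eq_lintegral_ofReal hint
      (ae_of_all _ fun x => Finset.prod_nonneg fun i _ => gaussianPDFReal_nonneg 0 1 (x i)),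
    integral_fintype_prod_eq_prod (f := fun _ => gaussianPDFReal 0 1),
    ENNReal.ofReal_prod_of_nonneg fun i _ => setIntegral_nonneg_of_ae ?_]
  · simp_rw [gaussianReal_apply_eq_integral 0 one_ne_zero]
  · exact ae_of_all _ fun t => gaussianPDFReal_nonneg 0 1 t

section

variable {Ω : Type*} {mΩ : MeasurableSpace Ω} {μ : Measure Ω} [IsProbabilityMeasure μ]

lemma integral_abs_sub_integral_le_sqrt_variance {X : Ω → ℝ} (hX : MemLp X 2 μ) :
    ∫ ω, |X ω - μ[X]| ∂μ ≤ √Var[X; μ] := by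
  have hY : MemLp (fun ω => |X ω - μ[X]|) 2 μ := (hX.sub (memLp_const _)).abs
  -- Jensen's inequality `(E|Y|)² ≤ E Y²` is the nonnegativity of the variance of `|Y|`.
  have h := variance_nonneg (fun ω => |X ω - μ[X]|) μ
  rw [variance_eq_sub hY] at h
  simp only [Pi.pow_apply, sq_abs] at h
  rw [variance_eq_integral hX.aemeasurable]
  exact Real.le_sqrt_of_sq_le (by linarith)

lemma abs_integral_comp_sub_le_mul_sqrt_variance {X : Ω → ℝ} {f : ℝ → ℝ} {K : ℝ}
    (hX : MemLp X 2 μ) (hf : Measurable f) (hK : 0 ≤ K)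
    (hfX : ∀ᵐ ω ∂μ, |f (X ω) - f μ[X]| ≤ K * |X ω - μ[X]|) :
    |∫ ω, f (X ω) ∂μ - f μ[X]| ≤ K * √Var[X; μ] := by
  have hdev : Integrable (fun ω => K * |X ω - μ[X]|) μ :=
    ((hX.integrable one_le_two).sub (integrable_const _)).abs.const_mul K
  have hdiff : Integrable (fun ω => f (X ω) - f μ[X]) μ :=
    hdev.mono' ((hf.comp_aemeasurable hX.aemeasurable).sub_const _).aestronglyMeasurable
      (by simpa only [Real.norm_eq_abs] using hfX)
  calc |∫ ω, f (X ω) ∂μ - f μ[X]|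
      = |∫ ω, (f (X ω) - f μ[X]) ∂μ| := by
        have hfXint : Integrable (fun ω => f (X ω)) μ :=
          (hdiff.add (integrable_const (f μ[X]))).congr (ae_of_all _ fun _ => sub_add_cancel _ _)
        rw [integral_sub hfXint (integrable_const _), integral_const, probReal_univ, one_smul]
    _ ≤ ∫ ω, K * |X ω - μ[X]| ∂μ := abs_integral_le_integral_abs.trans
        (integral_mono_ae hdiff.abs hdev hfX)
    _ ≤ K * √Var[X; μ] := by
        rw [integral_const_mul]
        exact mul_le_mul_of_nonneg_left (integral_abs_sub_integral_le_sqrt_variance hX) hK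

end

section

variable {ι : Type*} [Fintype ι]

lemma dotProduct_self_eq_sum_sq (x : ι → ℝ) : x ⬝ᵥ x = ∑ i, x i ^ 2 := by
  simp only [dotProduct, sq]

lemma memLp_sq_eval_pi_gaussianReal (i : ι) :
    MemLp (fun x : ι → ℝ => x i ^ 2) 2 (Measure.pi fun _ => gaussianReal 0 1) :=
  (memLp_sq_gaussianReal 0 1).comp_measurePreserving
    (measurePreserving_eval (fun _ : ι => gaussianReal 0 1) i)

lemma memLp_dotProduct_self_pi_gaussianReal :
    MemLp (fun x : ι → ℝ => x ⬝ᵥ x) 2 (Measure.pi fun _ => gaussianReal 0 1) := by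
  simp only [dotProduct_self_eq_sum_sq]
  exact memLp_finsetSum (Finset.univ : Finset ι) fun i _ => memLp_sq_eval_pi_gaussianReal i

lemma integral_dotProduct_self_pi_gaussianReal :
    ∫ x, x ⬝ᵥ x ∂(Measure.pi fun _ : ι => gaussianReal 0 1) = Fintype.card ι := by
  simp only [dotProduct_self_eq_sum_sq]
  rw [integral_finsetSum _ fun i _ => (memLp_sq_eval_pi_gaussianReal i).integrable one_le_two]
  simp [integral_comp_eval (μ := fun _ : ι => gaussianReal 0 1) (f := fun t : ℝ => t ^ 2)
    (by fun_prop), integral_sq_gaussianReal]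

lemma variance_dotProduct_self_pi_gaussianReal :
    Var[fun x : ι → ℝ => x ⬝ᵥ x; Measure.pi fun _ => gaussianReal 0 1] = 2 * Fintype.card ι := by
  have h := variance_sum_pi (μ := fun _ : ι => gaussianReal 0 1)
    fun _ => memLp_sq_gaussianReal 0 1
  simp only [variance_sq_gaussianReal, Finset.sum_const, Finset.card_univ, nsmul_eq_mul] at h
  rw [mul_comm, ← h]
  congr 1 with x
  simp [dotProduct_self_eq_sum_sq]

lemma abs_integral_pi_gaussianReal_sub_le [Nonempty ι] (c : ℝ) :
    |∫ x, (x ⬝ᵥ x / Fintype.card ι) * stdNormalCDF (-c * √(x ⬝ᵥ x / Fintype.card ι))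
        ∂(Measure.pi fun _ : ι => gaussianReal 0 1) - stdNormalCDF (-c)|
      ≤ (1 + |c|) * √(2 / Fintype.card ι) := by
  set n : ℝ := (Fintype.card ι : ℝ) with hn_def
  have hn : n ≠ 0 := Nat.cast_ne_zero.2 Fintype.card_ne_zero
  have hX : MemLp (fun x : ι → ℝ => x ⬝ᵥ x / n) 2 (Measure.pi fun _ => gaussianReal 0 1) := by
    simpa only [div_eq_mul_inv] using memLp_dotProduct_self_pi_gaussianReal.mul_const n⁻¹
  have hmean : ∫ x, x ⬝ᵥ x / n ∂(Measure.pi fun _ : ι => gaussianReal 0 1) = 1 := by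
    rw [integral_div, integral_dotProduct_self_pi_gaussianReal, div_self hn]
  have hvar : Var[fun x : ι → ℝ => x ⬝ᵥ x / n; Measure.pi fun _ => gaussianReal 0 1] = 2 / n := by
    simp_rw [div_eq_inv_mul _ n]
    rw [variance_const_mul, variance_dotProduct_self_pi_gaussianReal, ← hn_def]
    field_simp
  have hpointwise : ∀ x : ι → ℝ, |x ⬝ᵥ x / n * stdNormalCDF (-c * √(x ⬝ᵥ x / n))
      - stdNormalCDF (-c)| ≤ (1 + |c|) * |x ⬝ᵥ x / n - 1| := fun x =>
    abs_mul_stdNormalCDF_sub_le c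
      (div_nonneg (by rw [dotProduct_self_eq_sum_sq]; positivity) (Nat.cast_nonneg _))
  have h := abs_integral_comp_sub_le_mul_sqrt_variance hX
    (f := fun s => s * stdNormalCDF (-c * √s)) (K := 1 + |c|)
    (measurable_id.mul (monotone_stdNormalCDF.measurable.comp (by fun_prop))) (by positivity)
    (ae_of_all _ fun x => by simpa only [hmean, Real.sqrt_one, mul_one, one_mul] using hpointwise x)
  simpa only [hmean, hvar, one_mul, Real.sqrt_one, mul_one] using h

end

theorem esjd_tendsto_high_dim_general (l : ℝ) :
    Tendsto (fun d : ℕ =>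
        2 * l ^ 2 * ∫ x : Fin d → ℝ,
          ((x ⬝ᵥ x) / (d : ℝ)) *
            stdNormalCDF (-(l / 2) * (Real.sqrt (x ⬝ᵥ x) / Real.sqrt (d : ℝ)))
          ∂(mvGaussian 0 1))
      atTop (nhds (2 * l ^ 2 * stdNormalCDF (-(l / 2)))) := by
  have hbound : ∀ᶠ d : ℕ in atTop,
      ‖(∫ x : Fin d → ℝ, ((x ⬝ᵥ x) / (d : ℝ)) *
          stdNormalCDF (-(l / 2) * (Real.sqrt (x ⬝ᵥ x) / Real.sqrt (d : ℝ))) ∂(mvGaussian 0 1))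
        - stdNormalCDF (-(l / 2))‖ ≤ (1 + |l / 2|) * √(2 / d) := by
    filter_upwards [eventually_ge_atTop 1] with d hd
    have : Nonempty (Fin d) := ⟨⟨0, hd⟩⟩
    simpa only [mvGaussian_zero_one, Fintype.card_fin, Real.norm_eq_abs,
      ← Real.sqrt_div' _ (Nat.cast_nonneg d)] using
      abs_integral_pi_gaussianReal_sub_le (ι := Fin d) (l / 2)
  have hrate : Tendsto (fun d : ℕ => (1 + |l / 2|) * √(2 / d)) atTop (nhds 0) := by
    simpa using ((tendsto_const_div_atTop_nhds_zero_nat 2).sqrt).const_mul (1 + |l / 2|)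
  exact (tendsto_sub_nhds_zero_iff.1 (squeeze_zero_norm' hbound hrate)).const_mul (2 * l ^ 2)

/-- Convergence of the ESJD of the limiting RWM with scaling `λ = ℓ/√d` and proposal
covariance matched to the target covariance: for `ε_d ∼ N(0, I_d)`,
`2ℓ² E[(‖ε_d‖²/d) Φ(−(ℓ/2)‖ε_d‖/√d)] → 2ℓ² Φ(−ℓ/2)` as `d → ∞`. -/
theorem esjd_tendsto_high_dim (l : ℝ) (hl : 0 < l) :
    Tendsto (fun d : ℕ =>
        2 * l ^ 2 * ∫ x : Fin d → ℝ,
          ((x ⬝ᵥ x) / (d : ℝ)) *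
            stdNormalCDF (-(l / 2) * (Real.sqrt (x ⬝ᵥ x) / Real.sqrt (d : ℝ)))
          ∂(mvGaussian 0 1))
      atTop (nhds (2 * l ^ 2 * stdNormalCDF (-(l / 2)))) :=
  esjd_tendsto_high_dim_general l
end

section
/- Let d ≥ 1, let p and q be probability density functions on ℝ^d, let C and F be d×d real positive definite matrices, and let W be a random vector with distribution N(0, C). Then ∫∫ ‖z' − z‖²_F · |min{p(z), p(z')} − min{q(z), q(z')}| · φ(z'; z, C) dz' dz ≤ 2 · E[‖W‖²_F] · ∫ |p(z) − q(z)| dz. (Stability of the expected squared jumping distance under perturbation of the target density in total variation.) -/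
open MeasureTheory ProbabilityTheory Real Matrix Filter

/-!
Pointwise, `|min (p z) (p z') - min (q z) (q z')| ≤ |p z - q z| + |p z' - q z'|`, and the proposal
density `φ(z'; z, C)` depends only on `z' - z`. So the left-hand side is at most the double
integral of `k (z' - z) * (|p z - q z| + |p z' - q z'|)` with `k x = ‖x‖²_F φ(x; 0, C)`, and by
translation invariance of Lebesgue measure each of the two terms integrates to
`(∫ k) * ∫ |p - q|`, where `∫ k = E ‖W‖²_F`. Working with lower Lebesgue integrals (Tonelli)
avoids any integrability question for the inner integrals; the one analytic input is
integrability of `k`, which follows from `m ‖x‖² ≤ xᵀ C⁻¹ x` and `|xᵀ F x| ≤ b ‖x‖²`,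
both obtained by compactness of the unit sphere.
-/

open scoped ENNReal

theorem abs_min_sub_min_le_abs_sub_add_abs_sub {α : Type*} [AddCommGroup α] [LinearOrder α]
    [IsOrderedAddMonoid α] (a b c d : α) :
    |min a b - min c d| ≤ |a - c| + |b - d| :=
  (abs_min_sub_min_le_max a b c d).trans
    (max_le (le_add_of_nonneg_right (abs_nonneg _)) (le_add_of_nonneg_left (abs_nonneg _)))

theorem integral_integral_le_of_lintegral_lintegral_le {α β : Type*} [MeasurableSpace α]
    [MeasurableSpace β] {μ : Measure α} {ν : Measure β} [SFinite ν] {f : α → β → ℝ} {B : ℝ}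
    (hf0 : ∀ a b, 0 ≤ f a b) (hf : StronglyMeasurable (Function.uncurry f)) (hB : 0 ≤ B)
    (h : ∫⁻ a, ∫⁻ b, ENNReal.ofReal (f a b) ∂ν ∂μ ≤ ENNReal.ofReal B) :
    ∫ a, ∫ b, f a b ∂ν ∂μ ≤ B := by
  rw [integral_eq_lintegral_of_nonneg_ae (.of_forall fun a ↦ integral_nonneg (hf0 a))
    hf.integral_prod_right.aestronglyMeasurable]
  refine ENNReal.toReal_le_of_le_ofReal hB ((lintegral_mono fun a ↦ ?_).trans h)
  rw [integral_eq_lintegral_of_nonneg_ae (.of_forall (hf0 a))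
    (hf.comp_measurable measurable_prodMk_left).aestronglyMeasurable]
  exact ENNReal.ofReal_toReal_le

section Translation

variable {G : Type*} [MeasurableSpace G] [AddCommGroup G] [MeasurableAdd₂ G] [MeasurableNeg G]
  {μ : Measure G} [SFinite μ] [μ.IsAddLeftInvariant] [μ.IsNegInvariant]

theorem lintegral_lintegral_sub_mul_add {k f : G → ℝ≥0∞} (hk : Measurable k) (hf : Measurable f) :
    ∫⁻ z, ∫⁻ z', k (z' - z) * (f z + f z') ∂μ ∂μ = 2 * (∫⁻ x, k x ∂μ) * ∫⁻ x, f x ∂μ := by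
  have hk_sub (z : G) : Measurable fun z' ↦ k (z' - z) := hk.comp (measurable_sub_const z)
  have hk_sub' (z' : G) : Measurable fun z ↦ k (z' - z) := hk.comp (measurable_const_sub z')
  have swap : ∫⁻ z, ∫⁻ z', k (z' - z) * f z' ∂μ ∂μ = ∫⁻ z', ∫⁻ z, k (z' - z) * f z' ∂μ ∂μ :=
    lintegral_lintegral_swap
      ((hk.comp (measurable_snd.sub measurable_fst)).mul (hf.comp measurable_snd)).aemeasurable
  calc ∫⁻ z, ∫⁻ z', k (z' - z) * (f z + f z') ∂μ ∂μ
      = ∫⁻ z, ((∫⁻ x, k x ∂μ) * f z + ∫⁻ z', k (z' - z) * f z' ∂μ) ∂μ := by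
        refine lintegral_congr fun z ↦ ?_
        simp_rw [mul_add]
        rw [lintegral_add_left ((hk_sub z).mul_const _), lintegral_mul_const _ (hk_sub z),
          lintegral_sub_right_eq_self k z]
    _ = (∫⁻ x, k x ∂μ) * ∫⁻ x, f x ∂μ + (∫⁻ x, k x ∂μ) * ∫⁻ x, f x ∂μ := by
        rw [lintegral_add_left (hf.const_mul _), lintegral_const_mul _ hf, swap]
        simp_rw [lintegral_mul_const _ (hk_sub' _), lintegral_sub_left_eq_self k]
        rw [lintegral_const_mul _ hf]
    _ = 2 * (∫⁻ x, k x ∂μ) * ∫⁻ x, f x ∂μ := by ring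

theorem integral_integral_sub_mul_abs_min_sub_min_le {k p q : G → ℝ} (hk0 : 0 ≤ k)
    (hkm : Measurable k) (hk : Integrable k μ) (hpm : Measurable p) (hqm : Measurable q)
    (hpq : Integrable (fun x ↦ p x - q x) μ) :
    ∫ z, ∫ z', k (z' - z) * |min (p z) (p z') - min (q z) (q z')| ∂μ ∂μ
      ≤ 2 * (∫ x, k x ∂μ) * ∫ x, |p x - q x| ∂μ := by
  have hpqm : Measurable fun x ↦ |p x - q x| := (hpm.sub hqm).abs
  have hK : 0 ≤ ∫ x, k x ∂μ := integral_nonneg hk0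
  have hm : Measurable fun zz : G × G ↦
      k (zz.2 - zz.1) * |min (p zz.1) (p zz.2) - min (q zz.1) (q zz.2)| :=
    (hkm.comp (measurable_snd.sub measurable_fst)).mul
      (((hpm.comp measurable_fst).min (hpm.comp measurable_snd)).sub
        ((hqm.comp measurable_fst).min (hqm.comp measurable_snd))).abs
  refine integral_integral_le_of_lintegral_lintegral_le
    (fun z z' ↦ mul_nonneg (hk0 _) (abs_nonneg _)) hm.stronglyMeasurable
    (by positivity) ?_
  have pointwise (z z' : G) :
      ENNReal.ofReal (k (z' - z) * |min (p z) (p z') - min (q z) (q z')|)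
        ≤ ENNReal.ofReal (k (z' - z))
          * (ENNReal.ofReal |p z - q z| + ENNReal.ofReal |p z' - q z'|) := by
    rw [← ENNReal.ofReal_add (abs_nonneg _) (abs_nonneg _), ← ENNReal.ofReal_mul (hk0 _)]
    exact ENNReal.ofReal_le_ofReal
      (mul_le_mul_of_nonneg_left (abs_min_sub_min_le_abs_sub_add_abs_sub _ _ _ _) (hk0 _))
  calc ∫⁻ z, ∫⁻ z', ENNReal.ofReal (k (z' - z) * |min (p z) (p z') - min (q z) (q z')|) ∂μ ∂μ
      ≤ ∫⁻ z, ∫⁻ z', ENNReal.ofReal (k (z' - z))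
          * (ENNReal.ofReal |p z - q z| + ENNReal.ofReal |p z' - q z'|) ∂μ ∂μ :=
        lintegral_mono fun z ↦ lintegral_mono fun z' ↦ pointwise z z'
    _ = 2 * (∫⁻ x, ENNReal.ofReal (k x) ∂μ) * ∫⁻ x, ENNReal.ofReal |p x - q x| ∂μ :=
        lintegral_lintegral_sub_mul_add hkm.ennreal_ofReal hpqm.ennreal_ofReal
    _ = ENNReal.ofReal (2 * (∫ x, k x ∂μ) * ∫ x, |p x - q x| ∂μ) := by
        rw [← ofReal_integral_eq_lintegral_ofReal hk (.of_forall hk0),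
          ← ofReal_integral_eq_lintegral_ofReal hpq.abs (.of_forall fun _ ↦ abs_nonneg _),
          ENNReal.ofReal_mul (by positivity),
          ENNReal.ofReal_mul zero_le_two, ENNReal.ofReal_ofNat]

end Translation

theorem dotProduct_self_nonneg {ι : Type*} [Fintype ι] (x : ι → ℝ) : 0 ≤ x ⬝ᵥ x := by
  simpa using dotProduct_star_self_nonneg x

theorem dotProduct_self_pos {ι : Type*} [Fintype ι] {x : ι → ℝ} (hx : x ≠ 0) : 0 < x ⬝ᵥ x := by
  simpa using dotProduct_star_self_pos_iff.2 hx

theorem isCompact_dotProduct_self_eq_one {ι : Type*} [Fintype ι] :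
    IsCompact {x : ι → ℝ | x ⬝ᵥ x = 1} := by
  refine Metric.isCompact_of_isClosed_isBounded (isClosed_eq (by fun_prop) continuous_const)
    ((Metric.isBounded_closedBall (x := 0) (r := 1)).subset ?_)
  intro x (hx : x ⬝ᵥ x = 1)
  rw [mem_closedBall_zero_iff, pi_norm_le_iff_of_nonneg zero_le_one]
  intro i
  rw [Real.norm_eq_abs, abs_le_one_iff_mul_self_le_one, ← hx]
  exact Finset.single_le_sum (f := fun i ↦ x i * x i) (fun i _ ↦ mul_self_nonneg (x i))
    (Finset.mem_univ i)

section QuadForm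

variable {d : ℕ} (A : Matrix (Fin d) (Fin d) ℝ)

theorem continuous_quadForm : Continuous (quadForm A) := by
  unfold quadForm
  fun_prop

theorem quadForm_nonneg {A : Matrix (Fin d) (Fin d) ℝ} (hA : A.PosSemidef) (x : Fin d → ℝ) :
    0 ≤ quadForm A x := by
  simpa [quadForm] using hA.dotProduct_mulVec_nonneg x

theorem quadForm_smul (c : ℝ) (x : Fin d → ℝ) : quadForm A (c • x) = c ^ 2 * quadForm A x := by
  simp only [quadForm, mulVec_smul, smul_dotProduct, dotProduct_smul, smul_eq_mul]
  ring

theorem exists_dotProduct_self_eq_one_quadForm_eq {x : Fin d → ℝ} (hx : x ≠ 0) :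
    ∃ u : Fin d → ℝ, u ⬝ᵥ u = 1 ∧ quadForm A x = (x ⬝ᵥ x) * quadForm A u := by
  have hpos := dotProduct_self_pos hx
  set r := √(x ⬝ᵥ x)
  have hr : r ≠ 0 := (Real.sqrt_pos.2 hpos).ne'
  have hr2 : r ^ 2 = x ⬝ᵥ x := Real.sq_sqrt hpos.le
  refine ⟨r⁻¹ • x, ?_, ?_⟩
  · simp only [smul_dotProduct, dotProduct_smul, smul_eq_mul, ← mul_assoc, ← hr2]
    field_simp
  · rw [quadForm_smul, ← mul_assoc, ← hr2, inv_pow, mul_inv_cancel₀ (pow_ne_zero 2 hr), one_mul]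

theorem exists_pos_mul_dotProduct_self_le_quadForm {A : Matrix (Fin d) (Fin d) ℝ}
    (hA : A.PosDef) : ∃ m, 0 < m ∧ ∀ x, m * (x ⬝ᵥ x) ≤ quadForm A x := by
  obtain ⟨m, hm, hmin⟩ := isCompact_dotProduct_self_eq_one.exists_forall_le'
    (continuous_quadForm A).continuousOn (a := 0) fun u (hu : u ⬝ᵥ u = 1) ↦ by
      have hu0 : u ≠ 0 := by rintro rfl; simp at hu
      simpa [quadForm] using hA.dotProduct_mulVec_pos hu0
  refine ⟨m, hm, fun x ↦ ?_⟩
  rcases eq_or_ne x 0 with rfl | hx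
  · simp [quadForm]
  obtain ⟨u, hu, hxu⟩ := exists_dotProduct_self_eq_one_quadForm_eq A hx
  rw [hxu, mul_comm]
  exact mul_le_mul_of_nonneg_left (hmin u hu) (dotProduct_self_nonneg x)

theorem exists_abs_quadForm_le_mul_dotProduct_self : ∃ b, ∀ x, |quadForm A x| ≤ b * (x ⬝ᵥ x) := by
  obtain ⟨b, hb⟩ := isCompact_dotProduct_self_eq_one.exists_bound_of_continuousOn
    (continuous_quadForm A).continuousOn
  refine ⟨b, fun x ↦ ?_⟩
  rcases eq_or_ne x 0 with rfl | hx
  · simp [quadForm]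
  obtain ⟨u, hu, hxu⟩ := exists_dotProduct_self_eq_one_quadForm_eq A hx
  rw [hxu, abs_mul, abs_of_nonneg (dotProduct_self_nonneg x), mul_comm b]
  exact mul_le_mul_of_nonneg_left (hb u hu) (dotProduct_self_nonneg x)

end QuadForm

theorem integrable_exp_neg_mul_dotProduct_self {ι : Type*} [Fintype ι] {a : ℝ} (ha : 0 < a) :
    Integrable fun x : ι → ℝ ↦ exp (-a * (x ⬝ᵥ x)) := by
  have hprod (x : ι → ℝ) : exp (-a * (x ⬝ᵥ x)) = ∏ i, exp (-a * x i ^ 2) := by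
    simp only [dotProduct, Finset.mul_sum, Real.exp_sum, sq]
  simp_rw [hprod]
  exact Integrable.fintype_prod (f := fun _ t ↦ exp (-a * t ^ 2))
    fun _ ↦ integrable_exp_neg_mul_sq ha

theorem integrable_dotProduct_self_mul_exp_neg_mul_dotProduct_self {ι : Type*} [Fintype ι]
    {a : ℝ} (ha : 0 < a) : Integrable fun x : ι → ℝ ↦ (x ⬝ᵥ x) * exp (-a * (x ⬝ᵥ x)) := by
  refine ((integrable_exp_neg_mul_dotProduct_self (half_pos ha)).const_mul (2 / a)).mono'
    (by fun_prop) (.of_forall fun x ↦ ?_)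
  set t := x ⬝ᵥ x
  have ht : 0 ≤ t := dotProduct_self_nonneg x
  have hlin : t ≤ 2 / a * exp (a / 2 * t) :=
    calc t = 2 / a * (a / 2 * t) := by field_simp
      _ ≤ 2 / a * exp (a / 2 * t) := by
        gcongr
        linarith [Real.add_one_le_exp (a / 2 * t)]
  rw [Real.norm_eq_abs, abs_of_nonneg (by positivity)]
  calc t * exp (-a * t) ≤ 2 / a * exp (a / 2 * t) * exp (-a * t) := by gcongr
    _ = 2 / a * exp (-(a / 2) * t) := by rw [mul_assoc, ← Real.exp_add]; ring_nf

section Gaussian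

variable {d : ℕ} {S : Matrix (Fin d) (Fin d) ℝ}

theorem mvGaussianPdf_eq_sub (μ x : Fin d → ℝ) :
    mvGaussianPdf μ S x = mvGaussianPdf 0 S (x - μ) := by
  simp [mvGaussianPdf]

theorem measurable_mvGaussianPdf (μ : Fin d → ℝ) : Measurable (mvGaussianPdf μ S) := by
  unfold mvGaussianPdf
  fun_prop

theorem mvGaussianPdf_nonneg (hS : 0 ≤ S.det) (μ x : Fin d → ℝ) : 0 ≤ mvGaussianPdf μ S x := by
  unfold mvGaussianPdf
  have := Real.rpow_nonneg hS (-(1 : ℝ) / 2)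
  positivity

theorem integral_mvGaussian {E : Type*} [NormedAddCommGroup E] [NormedSpace ℝ E]
    (hS : 0 ≤ S.det) (μ : Fin d → ℝ) (h : (Fin d → ℝ) → E) :
    ∫ x, h x ∂mvGaussian μ S = ∫ x, mvGaussianPdf μ S x • h x := by
  rw [mvGaussian, integral_withDensity_eq_integral_toReal_smul
    (measurable_mvGaussianPdf μ).ennreal_ofReal (.of_forall fun _ ↦ ENNReal.ofReal_lt_top)]
  simp_rw [ENNReal.toReal_ofReal (mvGaussianPdf_nonneg hS μ _)]

theorem integrable_quadForm_mul_mvGaussianPdf (F : Matrix (Fin d) (Fin d) ℝ) (hS : S.PosDef) :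
    Integrable fun x ↦ quadForm F x * mvGaussianPdf 0 S x := by
  obtain ⟨m, hm, hmS⟩ := exists_pos_mul_dotProduct_self_le_quadForm hS.inv
  obtain ⟨b, hbF⟩ := exists_abs_quadForm_le_mul_dotProduct_self F
  set c : ℝ := (2 * π) ^ (-(d : ℝ) / 2) * S.det ^ (-(1 : ℝ) / 2)
  have hpdf (x) : mvGaussianPdf 0 S x = c * exp (-quadForm S⁻¹ x / 2) := by
    simp [mvGaussianPdf, quadForm, c]
  refine ((integrable_dotProduct_self_mul_exp_neg_mul_dotProduct_self (half_pos hm)).const_mul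
    (b * |c|)).mono' ((continuous_quadForm F).measurable.mul
      (measurable_mvGaussianPdf 0)).aestronglyMeasurable (.of_forall fun x ↦ ?_)
  have hexp : exp (-quadForm S⁻¹ x / 2) ≤ exp (-(m / 2) * (x ⬝ᵥ x)) := by
    gcongr
    linarith [hmS x]
  rw [Real.norm_eq_abs, abs_mul, hpdf, abs_mul, abs_of_pos (exp_pos _)]
  calc |quadForm F x| * (|c| * exp (-quadForm S⁻¹ x / 2))
      ≤ b * (x ⬝ᵥ x) * (|c| * exp (-(m / 2) * (x ⬝ᵥ x))) :=
        mul_le_mul (hbF x) (by gcongr) (by positivity) ((abs_nonneg _).trans (hbF x))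
    _ = b * |c| * ((x ⬝ᵥ x) * exp (-(m / 2) * (x ⬝ᵥ x))) := by ring

end Gaussian

theorem esjd_tv_stability_general {d : ℕ}
    (p q : (Fin d → ℝ) → ℝ) (hpm : Measurable p) (hqm : Measurable q)
    (hp1 : ∫ x, p x = 1) (hq1 : ∫ x, q x = 1)
    (C F : Matrix (Fin d) (Fin d) ℝ) (hC : C.PosDef) (hF : F.PosDef)
    {Ω : Type*} [MeasureSpace Ω]
    (W : Ω → (Fin d → ℝ)) (hWm : Measurable W)
    (hW : Measure.map W ℙ = mvGaussian 0 C) :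
    ∫ z : Fin d → ℝ, ∫ z' : Fin d → ℝ,
        quadForm F (z' - z) * |min (p z) (p z') - min (q z) (q z')| * mvGaussianPdf z C z'
      ≤ 2 * (∫ ω, quadForm F (W ω) ∂ℙ) * ∫ z : Fin d → ℝ, |p z - q z| := by
  set k : (Fin d → ℝ) → ℝ := fun x ↦ quadForm F x * mvGaussianPdf 0 C x
  have hk0 : 0 ≤ k := fun x ↦
    mul_nonneg (quadForm_nonneg hF.posSemidef x) (mvGaussianPdf_nonneg hC.det_pos.le 0 x)
  have hkm : Measurable k := (continuous_quadForm F).measurable.mul (measurable_mvGaussianPdf 0)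
  have hmoment : ∫ ω, quadForm F (W ω) ∂ℙ = ∫ x, k x := by
    rw [← integral_map hWm.aemeasurable (continuous_quadForm F).aestronglyMeasurable, hW,
      integral_mvGaussian hC.det_pos.le]
    simp_rw [k, smul_eq_mul, mul_comm]
  have hkernel (z z' : Fin d → ℝ) :
      quadForm F (z' - z) * |min (p z) (p z') - min (q z) (q z')| * mvGaussianPdf z C z'
        = k (z' - z) * |min (p z) (p z') - min (q z) (q z')| := by
    rw [mvGaussianPdf_eq_sub]
    ring
  simp_rw [hkernel, hmoment]
  exact integral_integral_sub_mul_abs_min_sub_min_le hk0 hkm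
    (integrable_quadForm_mul_mvGaussianPdf F hC) hpm hqm
    ((integrable_of_integral_eq_one hp1).sub (integrable_of_integral_eq_one hq1))

/-- Stability of the expected squared jumping distance under total-variation perturbation of
the target density: for probability densities `p, q` on `ℝ^d`, positive definite matrices
`C` and `F`, and `W ∼ N(0, C)`,
`∫∫ ‖z'−z‖²_F |min{p(z), p(z')} − min{q(z), q(z')}| φ(z'; z, C) dz' dz
  ≤ 2 E[‖W‖²_F] ∫ |p − q|`. -/
theorem esjd_tv_stability {d : ℕ} (hd : 1 ≤ d)
    (p q : (Fin d → ℝ) → ℝ) (hpm : Measurable p) (hqm : Measurable q)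
    (hp0 : ∀ x, 0 ≤ p x) (hq0 : ∀ x, 0 ≤ q x)
    (hp1 : ∫ x, p x = 1) (hq1 : ∫ x, q x = 1)
    (C F : Matrix (Fin d) (Fin d) ℝ) (hC : C.PosDef) (hF : F.PosDef)
    {Ω : Type*} [MeasureSpace Ω] [IsProbabilityMeasure (ℙ : Measure Ω)]
    (W : Ω → (Fin d → ℝ)) (hWm : Measurable W)
    (hW : Measure.map W ℙ = mvGaussian 0 C) :
    ∫ z : Fin d → ℝ, ∫ z' : Fin d → ℝ,
        quadForm F (z' - z) * |min (p z) (p z') - min (q z) (q z')| * mvGaussianPdf z C z'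
      ≤ 2 * (∫ ω, quadForm F (W ω) ∂ℙ) * ∫ z : Fin d → ℝ, |p z - q z| :=
  esjd_tv_stability_general p q hpm hqm hp1 hq1 C F hC hF W hWm hW
end
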